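/- Suppose V = V_1 ⊕ ⋯ ⊕ V_l is an orthogonal decomposition of a finite-dimensional Hermitian vector space, and A(t) is a family of positive definite Hermitian endomorphisms such that for each i, every unit vector v ∈ V_i satisfies lim_{t→∞} (1/t)·log⟨A(t)v, v⟩ = -μ_i - 1, uniformly on the unit sphere of V_i, where μ_1 > ⋯ > μ_l. Then lim_{t→∞} (1/t)·log det A(t) = Σ_i (-μ_i - 1)·dim_ℂ V_i. -/

import Mathlib

/-!
Choose an orthonormal basis `b` adapted to `V = V_1 ⊕ ⋯ ⊕ V_l` in which every compression
`P_i A(t) P_i` is diagonal. The Gram matrix of `A(t)` in this basis has diagonal entries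
`λ_a = ⟨A(t) b_a, b_a⟩`, with `(1/t) log λ_a → -μ_i - 1` for `b_a ∈ V_i`. Rescaled by
`diag(λ_a^{-1/2})` it becomes a Hermitian matrix with unit diagonal whose off-diagonal entries
vanish inside a block and are at most `δ` across blocks by asymptotic orthogonality. Gershgorin's
theorem puts its eigenvalues in `[1 - Nδ, 1 + Nδ]`, so `log det A(t) = ∑ log λ_a + O(N²δ)`;
dividing by `t` gives the limit.
-/

open Filter Topology

theorem tendsto_nhds_of_forall_eventually_abs_sub_le {α : Type*} {l : Filter α} {f : α → ℝ}
    {L C δ₀ : ℝ} (hδ₀ : 0 < δ₀)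
    (h : ∀ δ, 0 < δ → δ ≤ δ₀ → ∀ᶠ x in l, |f x - L| ≤ C * δ) : Tendsto f l (𝓝 L) := by
  rw [Metric.tendsto_nhds]
  intro ε hε
  set δ := min δ₀ (ε / (2 * (|C| + 1)))
  have hδ : 0 < δ := lt_min hδ₀ (by positivity)
  have hCδ : C * δ < ε := by
    have hδε : δ * (2 * (|C| + 1)) ≤ ε := (le_div_iff₀ (by positivity)).1 (min_le_right _ _)
    nlinarith [mul_nonneg (sub_nonneg.2 (le_abs_self C)) hδ.le]
  filter_upwards [h δ hδ (min_le_left _ _)] with x hx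
  rw [Real.dist_eq]
  exact hx.trans_lt hCδ

theorem abs_one_div_mul_sub_sum_le {ι : Type*} [Fintype ι] {t D E δ : ℝ} {x c : ι → ℝ}
    (ht : 1 ≤ t) (hD : |D - ∑ a, x a| ≤ E) (hx : ∀ a, |1 / t * x a - c a| ≤ δ) :
    |1 / t * D - ∑ a, c a| ≤ E + Fintype.card ι * δ := by
  have hsplit : 1 / t * D - ∑ a, c a = 1 / t * (D - ∑ a, x a) + ∑ a, (1 / t * x a - c a) := by
    rw [Finset.sum_sub_distrib, ← Finset.mul_sum]; ring
  have ht' : |1 / t| ≤ 1 := by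
    rw [abs_of_pos (by positivity)]; exact div_le_one_of_le₀ ht (by positivity)
  rw [hsplit]
  refine (abs_add_le _ _).trans (add_le_add ?_ ?_)
  · rw [abs_mul]
    exact (mul_le_mul ht' hD (abs_nonneg _) zero_le_one).trans_eq (one_mul E)
  · calc |∑ a, (1 / t * x a - c a)| ≤ ∑ a, |1 / t * x a - c a| := Finset.abs_sum_le_sum_abs _ _
      _ ≤ ∑ _a : ι, δ := Finset.sum_le_sum fun a _ => hx a
      _ = Fintype.card ι * δ := by simp

theorem Real.abs_log_le_two_mul_of_abs_sub_one_le {x y : ℝ} (hx : x ≤ 1 / 2)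
    (h : |y - 1| ≤ x) : |Real.log y| ≤ 2 * x := by
  obtain ⟨hlo, hhi⟩ := abs_le.mp h
  have hy : 1 / 2 ≤ y := by linarith
  have hy0 : 0 < y := by linarith
  have hupper : Real.log y ≤ y - 1 := Real.log_le_sub_one_of_pos hy0
  have hlower : 1 - y⁻¹ ≤ Real.log y := Real.one_sub_inv_le_log_of_pos hy0
  have hinv : 1 - y⁻¹ = (y - 1) / y := by field_simp
  have : -(2 * x) ≤ (y - 1) / y := by
    rw [le_div_iff₀ hy0]; nlinarith
  rw [abs_le]; constructor <;> linarith

section Gershgorin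

variable {𝕜 ι : Type*} [RCLike 𝕜] [Fintype ι] [DecidableEq ι] {Q : Matrix ι ι 𝕜} {r : ℝ}

theorem Matrix.IsHermitian.abs_eigenvalues_sub_one_le (hQ : Q.IsHermitian)
    (hdiag : ∀ k, Q k k = 1) (hrow : ∀ k, ∑ j ∈ Finset.univ.erase k, ‖Q k j‖ ≤ r) (j : ι) :
    |hQ.eigenvalues j - 1| ≤ r := by
  have hev : Module.End.HasEigenvalue (Matrix.toLin' Q) (hQ.eigenvalues j : 𝕜) := by
    apply Module.End.HasEigenvalue.of_mem_spectrum
    rw [Matrix.spectrum_toLin']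
    exact spectrum.algebraMap_mem 𝕜 (hQ.eigenvalues_mem_spectrum_real j)
  obtain ⟨k, hk⟩ := eigenvalue_mem_ball hev
  rw [Metric.mem_closedBall, hdiag k, dist_eq_norm, ← RCLike.ofReal_one, ← RCLike.ofReal_sub,
    RCLike.norm_ofReal] at hk
  exact hk.trans (hrow k)

theorem Matrix.IsHermitian.abs_log_norm_det_le (hQ : Q.IsHermitian)
    (hdiag : ∀ k, Q k k = 1) (hrow : ∀ k, ∑ j ∈ Finset.univ.erase k, ‖Q k j‖ ≤ r)
    (hr : r ≤ 1 / 2) : |Real.log ‖Q.det‖| ≤ Fintype.card ι * (2 * r) := by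
  have hlog : ∀ j, |Real.log (hQ.eigenvalues j)| ≤ 2 * r := fun j =>
    Real.abs_log_le_two_mul_of_abs_sub_one_le hr (hQ.abs_eigenvalues_sub_one_le hdiag hrow j)
  have hne : ∀ j, hQ.eigenvalues j ≠ 0 := fun j => by
    linarith [(abs_le.mp (hQ.abs_eigenvalues_sub_one_le hdiag hrow j)).1]
  have hnorm : ‖Q.det‖ = |∏ j, hQ.eigenvalues j| := by
    rw [hQ.det_eq_prod_eigenvalues, ← RCLike.ofReal_prod, RCLike.norm_ofReal]
  rw [hnorm, Real.log_abs, Real.log_prod fun j _ => hne j]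
  calc |∑ j, Real.log (hQ.eigenvalues j)| ≤ ∑ j, |Real.log (hQ.eigenvalues j)| :=
        Finset.abs_sum_le_sum_abs _ _
    _ ≤ ∑ _j : ι, 2 * r := Finset.sum_le_sum fun j _ => hlog j
    _ = Fintype.card ι * (2 * r) := by simp

open RCLike Matrix in
theorem Matrix.IsHermitian.abs_log_norm_det_sub_sum_log_diag_le {M : Matrix ι ι 𝕜}
    (hM : M.IsHermitian) (hdiag : ∀ a, 0 < re (M a a)) {δ : ℝ} (hδ₀ : 0 ≤ δ)
    (hoff : ∀ a a', a ≠ a' → ‖M a a'‖ ≤ δ * √(re (M a a) * re (M a' a')))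
    (hδ : Fintype.card ι * δ ≤ 1 / 2) :
    |Real.log ‖M.det‖ - ∑ a, Real.log (re (M a a))| ≤
      Fintype.card ι * (2 * (Fintype.card ι * δ)) := by
  set d : ι → ℝ := fun a => (√(re (M a a)))⁻¹
  have hd : ∀ a, 0 < d a := fun a => inv_pos.2 (Real.sqrt_pos.2 (hdiag a))
  have hd_sq : ∀ a, d a * d a = (re (M a a))⁻¹ := fun a => by
    rw [← mul_inv, Real.mul_self_sqrt (hdiag a).le]
  set D : Matrix ι ι 𝕜 := Matrix.diagonal fun a => (d a : 𝕜)
  set Q := Dᴴ * M * D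
  have hQ : Q.IsHermitian := Matrix.isHermitian_conjTranspose_mul_mul D hM
  have hQ_apply : ∀ a a', Q a a' = d a * d a' * M a a' := fun a a' => by
    simp only [Q, D, Matrix.diagonal_conjTranspose, Matrix.mul_diagonal, Matrix.diagonal_mul,
      Pi.star_apply, RCLike.star_def, RCLike.conj_ofReal]
    ring
  have hQ_diag : ∀ k, Q k k = 1 := fun k => by
    rw [hQ_apply, ← hM.coe_re_apply_self, ← RCLike.ofReal_mul, ← RCLike.ofReal_mul, hd_sq,
      inv_mul_cancel₀ (hdiag k).ne', RCLike.ofReal_one]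
  have hQ_off : ∀ k j, k ≠ j → ‖Q k j‖ ≤ δ := fun k j hkj => by
    rw [hQ_apply, norm_mul, ← RCLike.ofReal_mul, RCLike.norm_ofReal,
      abs_of_pos (mul_pos (hd k) (hd j))]
    calc d k * d j * ‖M k j‖ ≤ d k * d j * (δ * √(re (M k k) * re (M j j))) :=
          mul_le_mul_of_nonneg_left (hoff k j hkj) (mul_pos (hd k) (hd j)).le
      _ = δ * (d k * √(re (M k k))) * (d j * √(re (M j j))) := by
          rw [Real.sqrt_mul (hdiag k).le]; ring
      _ = δ := by
          simp only [d, inv_mul_cancel₀ (Real.sqrt_pos.2 (hdiag _)).ne', mul_one]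
  have hrow : ∀ k, ∑ j ∈ Finset.univ.erase k, ‖Q k j‖ ≤ Fintype.card ι * δ := fun k =>
    calc ∑ j ∈ Finset.univ.erase k, ‖Q k j‖ ≤ ∑ _j ∈ Finset.univ.erase k, δ :=
          Finset.sum_le_sum fun j hj => hQ_off k j (Finset.ne_of_mem_erase hj).symm
      _ ≤ Fintype.card ι * δ := by
          rw [Finset.sum_const, nsmul_eq_mul]
          gcongr
          exact_mod_cast Finset.card_le_univ _
  have hQ_det : ‖Q.det‖ = (∏ a, (re (M a a))⁻¹) * ‖M.det‖ := by
    simp only [Q, D, Matrix.det_mul, Matrix.det_conjTranspose, Matrix.det_diagonal, norm_mul,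
      norm_star, norm_prod, RCLike.norm_ofReal, abs_of_pos (hd _), ← hd_sq,
      Finset.prod_mul_distrib]
    ring
  have hQ_det_ne : ‖Q.det‖ ≠ 0 := norm_ne_zero_iff.2 <| det_ne_zero_of_sum_row_lt_diag
    fun k => by rw [hQ_diag, norm_one]; linarith [hrow k]
  have hM_det_ne : ‖M.det‖ ≠ 0 := by
    rintro h; rw [hQ_det, h, mul_zero] at hQ_det_ne; exact hQ_det_ne rfl
  have hlog : Real.log ‖Q.det‖ = Real.log ‖M.det‖ - ∑ a, Real.log (re (M a a)) := by
    rw [hQ_det, Real.log_mul (Finset.prod_ne_zero_iff.2 fun a _ => inv_ne_zero (hdiag a).ne')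
      hM_det_ne, Real.log_prod fun a _ => inv_ne_zero (hdiag a).ne']
    simp only [Real.log_inv, Finset.sum_neg_distrib]
    ring
  rw [← hlog]
  exact hQ.abs_log_norm_det_le hQ_diag hrow hδ

end Gershgorin

section InnerProductSpace

variable {𝕜 E : Type*} [RCLike 𝕜] [NormedAddCommGroup E] [InnerProductSpace 𝕜 E]

open RCLike in
theorem LinearMap.IsSymmetric.abs_log_norm_det_sub_sum_log_le {ι : Type*} [Fintype ι]
    [DecidableEq ι] (b : OrthonormalBasis ι 𝕜 E) {T : E →ₗ[𝕜] E} (hT : T.IsSymmetric)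
    (hpos : ∀ a, 0 < re (inner 𝕜 (T (b a)) (b a))) {δ : ℝ} (hδ₀ : 0 ≤ δ)
    (hoff : ∀ a a', a ≠ a' → ‖inner 𝕜 (T (b a)) (b a')‖ ≤
      δ * √(re (inner 𝕜 (T (b a)) (b a)) * re (inner 𝕜 (T (b a')) (b a'))))
    (hδ : Fintype.card ι * δ ≤ 1 / 2) :
    |Real.log ‖T.det‖ - ∑ a, Real.log (re (inner 𝕜 (T (b a)) (b a)))| ≤
      Fintype.card ι * (2 * (Fintype.card ι * δ)) := by
  have hM : ∀ a a', LinearMap.toMatrix b.toBasis b.toBasis T a a' = inner 𝕜 (T (b a)) (b a') :=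
    fun a a' => by
      rw [LinearMap.toMatrix_apply, b.coe_toBasis, b.coe_toBasis_repr_apply, b.repr_apply_apply,
        hT]
  have hdet : T.det = (LinearMap.toMatrix b.toBasis b.toBasis T).det :=
    (LinearMap.det_toMatrix b.toBasis T).symm
  simp only [hdet, ← hM] at hpos hoff ⊢
  exact ((LinearMap.isHermitian_toMatrix_iff b).2 hT).abs_log_norm_det_sub_sum_log_diag_le
    hpos hδ₀ hoff hδ

theorem OrthogonalFamily.exists_orthonormalBasis_inner_eq_zero [FiniteDimensional 𝕜 E]
    {ι : Type*} [Fintype ι] [DecidableEq ι] {V : ι → Submodule 𝕜 E}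
    (hV : OrthogonalFamily 𝕜 (fun i => V i) fun i => (V i).subtypeₗᵢ) (hspan : iSup V = ⊤)
    {T : E →ₗ[𝕜] E} (hT : T.IsSymmetric) :
    ∃ b : OrthonormalBasis (Σ i, Fin (Module.finrank 𝕜 (V i))) 𝕜 E, (∀ a, b a ∈ V a.1) ∧
      ∀ a a', a.1 = a'.1 → a ≠ a' → inner 𝕜 (T (b a)) (b a') = 0 := by
  let S : ∀ i, V i →ₗ[𝕜] V i := fun i => (V i).subtype.adjoint ∘ₗ T ∘ₗ (V i).subtype
  have hS : ∀ i, (S i).IsSymmetric := fun i => hT.adjoint_conj _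
  let u : ∀ i, OrthonormalBasis (Fin (Module.finrank 𝕜 (V i))) 𝕜 (V i) :=
    fun i => (hS i).eigenvectorBasis rfl
  have hint : DirectSum.IsInternal fun i => V i :=
    DirectSum.isInternal_submodule_of_iSupIndep_of_iSup_eq_top hV.independent hspan
  let b := hint.collectedOrthonormalBasis hV u
  have hb : ∀ a, b a = u a.1 a.2 := fun a => by
    simp [b, DirectSum.IsInternal.collectedOrthonormalBasis]
  refine ⟨b, hint.collectedOrthonormalBasis_mem hV u, ?_⟩
  rintro ⟨i, k⟩ ⟨j, k'⟩ (rfl : i = j) hkk'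
  have hk : k ≠ k' := fun h => hkk' (h ▸ rfl)
  have hcompress : inner 𝕜 (S i (u i k)) (u i k') = inner 𝕜 (T (u i k)) (u i k' : E) := by
    simp [S, LinearMap.adjoint_inner_left]
  rw [hb, hb, ← hcompress, (hS i).apply_eigenvectorBasis, inner_smul_left,
    orthonormal_iff_ite.mp (u i).orthonormal, if_neg hk, mul_zero]

end InnerProductSpace

theorem stmt_16_general (V : Type*) [NormedAddCommGroup V] [InnerProductSpace ℂ V]
    [FiniteDimensional ℂ V] (l : ℕ)
    (Vsub : Fin l → Submodule ℂ V)
    (horth : ∀ i j, i ≠ j → ∀ v ∈ Vsub i, ∀ w ∈ Vsub j, (inner ℂ v w : ℂ) = 0)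
    (hspan : iSup Vsub = ⊤)
    (μ : Fin l → ℝ)
    (A : ℝ → V →ₗ[ℂ] V)
    (hsym : ∀ t, LinearMap.IsSymmetric (A t))
    (hpos : ∀ (t : ℝ) (v : V), v ≠ 0 → 0 < (inner ℂ (A t v) v : ℂ).re)
    (hrate : ∀ i, ∀ ε > (0:ℝ), ∃ T : ℝ, ∀ t ≥ T, ∀ v ∈ Vsub i, ‖v‖ = 1 →
      |(1 / t) * Real.log ((inner ℂ (A t v) v : ℂ).re) - (-(μ i) - 1)| < ε)
    (hasorth : ∀ i j, i ≠ j → ∀ ε > (0:ℝ), ∃ T : ℝ, ∀ t ≥ T,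
      ∀ v ∈ Vsub i, ∀ w ∈ Vsub j, ‖v‖ = 1 → ‖w‖ = 1 →
        ‖inner ℂ (A t v) w‖ ≤
          ε * Real.sqrt ((inner ℂ (A t v) v : ℂ).re * (inner ℂ (A t w) w : ℂ).re)) :
    Tendsto (fun t => (1 / t) * Real.log (‖LinearMap.det (A t)‖))
      atTop
      (𝓝 (∑ i, (-(μ i) - 1) * (Module.finrank ℂ (Vsub i) : ℝ))) := by
  classical
  have hV : OrthogonalFamily ℂ (fun i => Vsub i) fun i => (Vsub i).subtypeₗᵢ :=
    fun i j hij v w => horth i j hij v v.2 w w.2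
  set N := Fintype.card (Σ i, Fin (Module.finrank ℂ (Vsub i)))
  have hlim : ∑ i, (-(μ i) - 1) * (Module.finrank ℂ (Vsub i) : ℝ) =
      ∑ a : Σ i, Fin (Module.finrank ℂ (Vsub i)), (-(μ a.1) - 1) := by
    simp only [Fintype.sum_sigma, Finset.sum_const, Finset.card_univ, Fintype.card_fin,
      nsmul_eq_mul, mul_comm]
  rw [hlim]
  refine tendsto_nhds_of_forall_eventually_abs_sub_le (C := N * (2 * N) + N)
    (δ₀ := 1 / (2 * N + 1)) (by positivity) fun δ hδ hδδ₀ => ?_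
  have hNδ : N * δ ≤ 1 / 2 := by
    rw [le_div_iff₀ (by positivity)] at hδδ₀; nlinarith
  have hrate_ev := eventually_all.2 fun i => eventually_atTop.2 (hrate i δ hδ)
  have hasorth_ev := eventually_all.2 fun i => eventually_all.2 fun j =>
    eventually_imp_distrib_left.2 fun hij => eventually_atTop.2 (hasorth i j hij δ hδ)
  filter_upwards [hrate_ev, hasorth_ev, eventually_ge_atTop 1] with t hrate_t hasorth_t ht
  obtain ⟨b, hbmem, hbdiag⟩ := hV.exists_orthonormalBasis_inner_eq_zero hspan (hsym t)
  have hdet := (hsym t).abs_log_norm_det_sub_sum_log_le b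
    (fun a => hpos t _ (b.orthonormal.ne_zero a)) hδ.le (fun a a' haa' => by
      by_cases h : a.1 = a'.1
      · rw [hbdiag a a' h haa', norm_zero]; positivity
      · exact hasorth_t a.1 a'.1 h _ (hbmem a) _ (hbmem a') (b.orthonormal.1 a)
          (b.orthonormal.1 a')) hNδ
  have hbound := abs_one_div_mul_sub_sum_le ht hdet fun a =>
    (hrate_t a.1 (b a) (hbmem a) (b.orthonormal.1 a)).le
  refine hbound.trans_eq ?_
  ring

/-- Chau–Tam Lyapunov regularity, item (iv): if `V = V_1 ⊕ ⋯ ⊕ V_l` is an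
orthogonal decomposition of a Hermitian vector space, `A(t)` are positive
definite Hermitian endomorphisms such that on the unit sphere of each `V_i`,
`(1/t)·log⟨A(t)v, v⟩ → -μ_i - 1` uniformly (with `μ_1 > ⋯ > μ_l > 0`), and the
subspaces are asymptotically orthogonal for `A(t)`, then
`(1/t)·log det A(t) → Σ_i (-μ_i - 1)·dim_ℂ V_i`. -/
theorem stmt_16 (V : Type*) [NormedAddCommGroup V] [InnerProductSpace ℂ V]
    [FiniteDimensional ℂ V] (l : ℕ)
    (Vsub : Fin l → Submodule ℂ V)
    (horth : ∀ i j, i ≠ j → ∀ v ∈ Vsub i, ∀ w ∈ Vsub j, (inner ℂ v w : ℂ) = 0)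
    (hspan : iSup Vsub = ⊤)
    (μ : Fin l → ℝ) (hμ : StrictAnti μ) (hμpos : ∀ i, 0 < μ i)
    (A : ℝ → V →ₗ[ℂ] V)
    (hsym : ∀ t, LinearMap.IsSymmetric (A t))
    (hpos : ∀ (t : ℝ) (v : V), v ≠ 0 → 0 < (inner ℂ (A t v) v : ℂ).re)
    (hrate : ∀ i, ∀ ε > (0:ℝ), ∃ T : ℝ, ∀ t ≥ T, ∀ v ∈ Vsub i, ‖v‖ = 1 →
      |(1 / t) * Real.log ((inner ℂ (A t v) v : ℂ).re) - (-(μ i) - 1)| < ε)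
    (hasorth : ∀ i j, i ≠ j → ∀ ε > (0:ℝ), ∃ T : ℝ, ∀ t ≥ T,
      ∀ v ∈ Vsub i, ∀ w ∈ Vsub j, ‖v‖ = 1 → ‖w‖ = 1 →
        ‖inner ℂ (A t v) w‖ ≤
          ε * Real.sqrt ((inner ℂ (A t v) v : ℂ).re * (inner ℂ (A t w) w : ℂ).re)) :
    Tendsto (fun t => (1 / t) * Real.log (‖LinearMap.det (A t)‖))
      atTop
      (𝓝 (∑ i, (-(μ i) - 1) * (Module.finrank ℂ (Vsub i) : ℝ))) :=
  stmt_16_general V l Vsub horth hspan μ A hsym hpos hrate hasorth
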